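/- arXiv:2511.02436 — 8 statements merged into one kernel-verified Lean document; each statement's English description precedes it below -/
import Mathlib

section
/- Assume w - c ≥ x_δ. Then γ := (1-δ)·r / (δ·(w+r)·(p-q) - δ·(1-q)·r) satisfies 0 < γ ≤ 1; the value W_N := w - c is the unique real solution of the equation W_N = (1-δ)·w + δ·(p + (1-p)·(1-γ))·W_N; and the worker's effort incentive constraint binds at this value: δ·γ·(p-q)·(w-c) = (1-δ)·r. -/
/-!
Using `(p - q) * c = (1 - p) * r`, the denominator defining `γ` factors as `δ (p - q) (w - c)`, so
`γ = x_δ / (w - c)`. Hence `γ ≤ 1` is exactly the hypothesis `x_δ ≤ w - c`, and the incentive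
constraint `δ γ (p - q) (w - c) = δ (p - q) x_δ = (1 - δ) r` binds. Multiplying it by `(1 - p) / (p - q)`
gives `δ (1 - p) γ (w - c) = (1 - δ) c`, which is the recursion at `w - c`; the recursion is affine in
`W_N` with slope `δ (1 - (1 - p) γ) < 1`, so it has no other solution.
-/

section GrimTrigger

variable {δ p q w r γ : ℝ}

lemma grimTrigger_denom_eq (hpq : p ≠ q) :
    δ * (w + r) * (p - q) - δ * (1 - q) * r = δ * (p - q) * (w - (1 - p) * r / (p - q)) := by
  have : p - q ≠ 0 := sub_ne_zero.2 hpq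
  field_simp
  ring

lemma grimTrigger_prob_eq_wedge_div (hpq : p ≠ q) :
    (1 - δ) * r / (δ * (w + r) * (p - q) - δ * (1 - q) * r) =
      (1 - δ) * r / (δ * (p - q)) / (w - (1 - p) * r / (p - q)) := by
  rw [grimTrigger_denom_eq hpq, div_div]

lemma effort_incentive_binds {W : ℝ} (hδ : δ ≠ 0) (hpq : p ≠ q) (hW : W ≠ 0) :
    δ * ((1 - δ) * r / (δ * (p - q)) / W) * (p - q) * W = (1 - δ) * r := by
  have : p - q ≠ 0 := sub_ne_zero.2 hpq
  field_simp

lemma normal_value_recursion {c : ℝ} (hpq : p ≠ q) (hc : (p - q) * c = (1 - p) * r)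
    (hIC : δ * γ * (p - q) * (w - c) = (1 - δ) * r) :
    w - c = (1 - δ) * w + δ * (p + (1 - p) * (1 - γ)) * (w - c) := by
  refine mul_left_cancel₀ (sub_ne_zero.2 hpq) ?_
  linear_combination (1 - p) * hIC - (1 - δ) * hc

lemma continuation_factor_lt_one (hδ0 : 0 ≤ δ) (hδ1 : δ < 1) (hp1 : p ≤ 1) (hγ : 0 ≤ γ) :
    δ * (p + (1 - p) * (1 - γ)) < 1 := by
  have : 0 ≤ (1 - p) * γ := mul_nonneg (sub_nonneg.2 hp1) hγ
  nlinarith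

end GrimTrigger

lemma eq_of_eq_add_mul_self {a b W V : ℝ} (hb : b ≠ 1) (hW : W = a + b * W) (hV : V = a + b * V) :
    W = V := by
  have : (1 - b) * (W - V) = 0 := by linear_combination hW - hV
  rcases mul_eq_zero.1 this with h | h
  · exact absurd (sub_eq_zero.1 h).symm hb
  · exact sub_eq_zero.1 h

theorem stmt0_general (δ p q w r c xδ γ : ℝ)
    (hδ0 : 0 < δ) (hδ1 : δ < 1)
    (hqp : q < p) (hp1 : p < 1)
    (hr : 0 < r)
    (hc : c = (1 - p) * r / (p - q))
    (hx : xδ = (1 - δ) * r / (δ * (p - q)))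
    (hwc : w - c ≥ xδ)
    (hγ : γ = (1 - δ) * r / (δ * (w + r) * (p - q) - δ * (1 - q) * r)) :
    (0 < γ ∧ γ ≤ 1) ∧
    (w - c = (1 - δ) * w + δ * (p + (1 - p) * (1 - γ)) * (w - c)) ∧
    (∀ W : ℝ, W = (1 - δ) * w + δ * (p + (1 - p) * (1 - γ)) * W → W = w - c) ∧
    δ * γ * (p - q) * (w - c) = (1 - δ) * r := by
  have hpq : 0 < p - q := sub_pos.2 hqp
  have hδ' : 0 < 1 - δ := sub_pos.2 hδ1
  have hx0 : 0 < xδ := by rw [hx]; positivity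
  have hwc0 : 0 < w - c := hx0.trans_le hwc
  have hγx : γ = xδ / (w - c) := by
    rw [hγ, hx, hc, grimTrigger_prob_eq_wedge_div hqp.ne']
  have hγ0 : 0 < γ := hγx ▸ div_pos hx0 hwc0
  have hIC : δ * γ * (p - q) * (w - c) = (1 - δ) * r := by
    rw [hγx, hx]
    exact effort_incentive_binds hδ0.ne' hqp.ne' hwc0.ne'
  have hrec := normal_value_recursion hqp.ne' (by rw [hc]; field_simp) hIC
  refine ⟨⟨hγ0, hγx ▸ div_le_one_of_le₀ hwc hwc0.le⟩, hrec, fun W hW => ?_, hIC⟩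
  exact eq_of_eq_add_mul_self
    (continuation_factor_lt_one hδ0.le hδ1 hp1.le hγ0.le).ne hW hrec

/-- grim-trigger construction attaining the worker's highest PPE payoff
in the no-mediation benchmark. -/
theorem stmt0 (δ p q w r c xδ γ : ℝ)
    (hδ0 : 0 < δ) (hδ1 : δ < 1)
    (hq0 : 0 < q) (hqp : q < p) (hp1 : p < 1)
    (hw : 0 < w) (hr : 0 < r)
    (hc : c = (1 - p) * r / (p - q))
    (hx : xδ = (1 - δ) * r / (δ * (p - q)))
    (hwc : w - c ≥ xδ)
    (hγ : γ = (1 - δ) * r / (δ * (w + r) * (p - q) - δ * (1 - q) * r)) :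
    (0 < γ ∧ γ ≤ 1) ∧
    (w - c = (1 - δ) * w + δ * (p + (1 - p) * (1 - γ)) * (w - c)) ∧
    (∀ W : ℝ, W = (1 - δ) * w + δ * (p + (1 - p) * (1 - γ)) * W → W = w - c) ∧
    δ * γ * (p - q) * (w - c) = (1 - δ) * r :=
  stmt0_general δ p q w r c xδ γ hδ0 hδ1 hqp hp1 hr hc hx hwc hγ
end

section
/- Suppose U, U_g, U_b ∈ ℝ satisfy 0 ≤ U_b, 0 ≤ U_g, U_g ≤ U, U_b ≤ U, U_g - U_b ≥ x_δ, and U = (1-δ)·w + δ·(p·U_g + (1-p)·U_b). Then U ≤ w - c and w - c ≥ x_δ. (Consequently, the worker's highest perfect public equilibrium payoff is at most max(0, w-c), and it is positive only if w - c ≥ x_δ.) -/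
/-! Since `U_g ≤ U` and `U_b ≤ U_g - x_δ`, the expected continuation payoff is at most
`U - (1 - p) x_δ`; promise keeping then gives `(1 - δ) U ≤ (1 - δ) w - δ (1 - p) x_δ`, and
`δ (1 - p) x_δ = (1 - δ) c`. Finally `x_δ ≤ U_g - U_b ≤ U_g ≤ U ≤ w - c`. -/

theorem one_sub_mul_add_le_of_promise_keeping {δ p w x U Ug Ub : ℝ}
    (hδ : 0 ≤ δ) (hp : p ≤ 1) (hUgU : Ug ≤ U) (hIC : x ≤ Ug - Ub)
    (hPK : U = (1 - δ) * w + δ * (p * Ug + (1 - p) * Ub)) :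
    (1 - δ) * U + δ * ((1 - p) * x) ≤ (1 - δ) * w := by
  have hcont : p * Ug + (1 - p) * Ub + (1 - p) * x ≤ U := by
    nlinarith [mul_le_mul_of_nonneg_left hIC (sub_nonneg.2 hp)]
  nlinarith [mul_le_mul_of_nonneg_left hcont hδ]

theorem mul_effort_wedge_eq {δ p q r : ℝ} (hδ : δ ≠ 0) (hpq : p - q ≠ 0) :
    δ * ((1 - p) * ((1 - δ) * r / (δ * (p - q)))) = (1 - δ) * ((1 - p) * r / (p - q)) := by
  field_simp

theorem stmt1_general (δ p q w r c xδ U Ug Ub : ℝ)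
    (hδ0 : 0 < δ) (hδ1 : δ < 1)
    (hqp : q < p) (hp1 : p < 1)
    (hc : c = (1 - p) * r / (p - q))
    (hx : xδ = (1 - δ) * r / (δ * (p - q)))
    (hUb0 : 0 ≤ Ub)
    (hUgU : Ug ≤ U)
    (hIC : Ug - Ub ≥ xδ)
    (hPK : U = (1 - δ) * w + δ * (p * Ug + (1 - p) * Ub)) :
    U ≤ w - c ∧ w - c ≥ xδ := by
  have hbound := one_sub_mul_add_le_of_promise_keeping hδ0.le hp1.le hUgU hIC hPK
  have hwedge : δ * ((1 - p) * xδ) = (1 - δ) * c := by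
    rw [hx, hc]; exact mul_effort_wedge_eq hδ0.ne' (sub_ne_zero.2 hqp.ne')
  have hU : U ≤ w - c :=
    le_of_mul_le_mul_left (by linear_combination hbound - hwedge) (sub_pos.2 hδ1)
  exact ⟨hU, by linarith⟩

/-- bound on the worker's PPE continuation payoff at a history
where he is accepted and exerts effort. -/
theorem stmt1 (δ p q w r c xδ U Ug Ub : ℝ)
    (hδ0 : 0 < δ) (hδ1 : δ < 1)
    (hq0 : 0 < q) (hqp : q < p) (hp1 : p < 1)
    (hw : 0 < w) (hr : 0 < r)
    (hc : c = (1 - p) * r / (p - q))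
    (hx : xδ = (1 - δ) * r / (δ * (p - q)))
    (hUb0 : 0 ≤ Ub) (hUg0 : 0 ≤ Ug)
    (hUgU : Ug ≤ U) (hUbU : Ub ≤ U)
    (hIC : Ug - Ub ≥ xδ)
    (hPK : U = (1 - δ) * w + δ * (p * Ug + (1 - p) * Ub)) :
    U ≤ w - c ∧ w - c ≥ xδ :=
  stmt1_general δ p q w r c xδ U Ug Ub hδ0 hδ1 hqp hp1 hc hx hUb0 hUgU hIC hPK
end

section
/- For every real U, the maximum over α ∈ [α_bar, 1] of α·((1-δ)·w + δ·(p·U + (1-p)·(U - x_δ))) + (1-α)·((1-δ)·(w+r) + δ·U) equals (1-δ)·U_bar + δ·U, and this maximum is attained uniquely at α = α_bar. Consequently, U_bar = α_bar·(w-c) + (1-α_bar)·(w+r) is the unique real fixed point of the map U ↦ max over α ∈ [α_bar, 1] of α·((1-δ)·w + δ·(p·U + (1-p)·(U - x_δ))) + (1-α)·((1-δ)·(w+r) + δ·U). -/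
/-!
The penalty `xδ` is calibrated so that `δ (1 - p) xδ = (1 - δ) c`: the expected loss of
continuation value from shirking exactly replaces the moral-hazard cost. Hence the objective
equals `(1 - δ) V α + δ U`, where `V α = α (w - c) + (1 - α) (w + r)` is the stage payoff.
Since `c > 0`, `V` is strictly decreasing, so the maximum over `[αbar, 1]` is attained only at
`αbar` and equals `(1 - δ) Ubar + δ U`; its fixed point in `U` is `Ubar` because `δ < 1`.
-/

def stagePayoff (w r c α : ℝ) : ℝ := α * (w - c) + (1 - α) * (w + r)

lemma stagePayoff_strictAnti {w r c : ℝ} (hrc : 0 < r + c) :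
    StrictAnti (stagePayoff w r c) := by
  intro α β hαβ
  unfold stagePayoff
  nlinarith

lemma discount_mul_wedge_eq_cost {δ p q r c xδ : ℝ} (hδ : δ ≠ 0)
    (hc : c = (1 - p) * r / (p - q)) (hx : xδ = (1 - δ) * r / (δ * (p - q))) :
    δ * (1 - p) * xδ = (1 - δ) * c := by
  subst hc hx
  rcases eq_or_ne (p - q) 0 with hpq | hpq
  · simp [hpq]
  · field_simp

lemma effort_payoff_eq {δ p w r c xδ : ℝ} (hcost : δ * (1 - p) * xδ = (1 - δ) * c)
    (U α : ℝ) :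
    α * ((1 - δ) * w + δ * (p * U + (1 - p) * (U - xδ)))
        + (1 - α) * ((1 - δ) * (w + r) + δ * U)
      = (1 - δ) * stagePayoff w r c α + δ * U := by
  unfold stagePayoff
  linear_combination (-α) * hcost

lemma convex_comb_eq_self_iff {δ V U : ℝ} (hδ : δ ≠ 1) :
    (1 - δ) * V + δ * U = U ↔ U = V := by
  have h1 : 1 - δ ≠ 0 := sub_ne_zero.mpr (Ne.symm hδ)
  constructor
  · intro h
    have : (1 - δ) * (V - U) = 0 := by linear_combination h
    linarith [(mul_eq_zero.mp this).resolve_left h1]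
  · rintro rfl
    ring

theorem stmt4_general (δ p q w r c xδ αbar Ubar : ℝ)
    (hδ0 : 0 < δ) (hδ1 : δ < 1)
    (hqp : q < p) (hp1 : p < 1)
    (hr : 0 < r)
    (hc : c = (1 - p) * r / (p - q))
    (hx : xδ = (1 - δ) * r / (δ * (p - q)))
    (hUbar : Ubar = αbar * (w - c) + (1 - αbar) * (w + r))
    (U : ℝ) :
    (∀ α ∈ Set.Icc αbar 1,
        α * ((1 - δ) * w + δ * (p * U + (1 - p) * (U - xδ)))
          + (1 - α) * ((1 - δ) * (w + r) + δ * U) ≤ (1 - δ) * Ubar + δ * U) ∧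
    (αbar * ((1 - δ) * w + δ * (p * U + (1 - p) * (U - xδ)))
        + (1 - αbar) * ((1 - δ) * (w + r) + δ * U) = (1 - δ) * Ubar + δ * U) ∧
    (∀ α ∈ Set.Icc αbar 1,
        α * ((1 - δ) * w + δ * (p * U + (1 - p) * (U - xδ)))
          + (1 - α) * ((1 - δ) * (w + r) + δ * U) = (1 - δ) * Ubar + δ * U →
        α = αbar) ∧
    ((1 - δ) * Ubar + δ * U = U ↔ U = Ubar) := by
  have hc0 : 0 < c := hc ▸ div_pos (mul_pos (by linarith) hr) (by linarith)
  have hV : StrictAnti (stagePayoff w r c) := stagePayoff_strictAnti (by linarith)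
  have hδ' : 0 < 1 - δ := by linarith
  have hUbar' : Ubar = stagePayoff w r c αbar := hUbar
  simp only [effort_payoff_eq (discount_mul_wedge_eq_cost hδ0.ne' hc hx), hUbar',
    convex_comb_eq_self_iff hδ1.ne]
  refine ⟨fun α hα => ?_, trivial, fun α hα heq => ?_, trivial⟩
  · have := hV.antitone hα.1
    gcongr
  · have : stagePayoff w r c α = stagePayoff w r c αbar := by
      simpa [hδ'.ne'] using heq
    exact hV.injective this

/-- the maximization defining the worker's highest PCE utility, and
its unique fixed point U_bar. -/
theorem stmt4 (δ p q w r g b vlo vhi c xδ αbar Ubar : ℝ)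
    (hδ0 : 0 < δ) (hδ1 : δ < 1)
    (hq0 : 0 < q) (hqp : q < p) (hp1 : p < 1)
    (hw : 0 < w) (hr : 0 < r)
    (hvlo : vlo = q * g + (1 - q) * b)
    (hvhi : vhi = p * g + (1 - p) * b)
    (hvlo0 : vlo < 0) (hvhi0 : 0 < vhi)
    (hc : c = (1 - p) * r / (p - q))
    (hx : xδ = (1 - δ) * r / (δ * (p - q)))
    (hαbar : αbar = -vlo / (vhi - vlo))
    (hUbar : Ubar = αbar * (w - c) + (1 - αbar) * (w + r))
    (U : ℝ) :
    (∀ α ∈ Set.Icc αbar 1,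
        α * ((1 - δ) * w + δ * (p * U + (1 - p) * (U - xδ)))
          + (1 - α) * ((1 - δ) * (w + r) + δ * U) ≤ (1 - δ) * Ubar + δ * U) ∧
    (αbar * ((1 - δ) * w + δ * (p * U + (1 - p) * (U - xδ)))
        + (1 - αbar) * ((1 - δ) * (w + r) + δ * U) = (1 - δ) * Ubar + δ * U) ∧
    (∀ α ∈ Set.Icc αbar 1,
        α * ((1 - δ) * w + δ * (p * U + (1 - p) * (U - xδ)))
          + (1 - α) * ((1 - δ) * (w + r) + δ * U) = (1 - δ) * Ubar + δ * U →
        α = αbar) ∧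
    ((1 - δ) * Ubar + δ * U = U ↔ U = Ubar) :=
  stmt4_general δ p q w r c xδ αbar Ubar hδ0 hδ1 hqp hp1 hr hc hx hUbar U
end

section
/- Assume U_bar > 0 and δ > δ_bar. Then 0 < U^P, 0 < U^I < U^R < U_bar, U^P ≤ U^R, and U_bar - x_δ < U^R. -/
/-!
The discount condition `δbar < δ` says exactly that the effort wedge `xδ` lies below `Ubar`, and
`Ubar` itself lies above `w - c` by `(1 - αbar) * (r + c)`. Both `UP` and `UR` are then averages
`(1 - δ) * (w - c) + δ * _` of `w - c` with something below, resp. equal to, `Ubar`, which gives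
the ordering. The last inequality reduces, after multiplying by `δ * (p - q)` and using
`(p - q) * (r + c) = (1 - q) * r`, to `δ * (1 - αbar) * (1 - q) < 1`.
-/

noncomputable def moralHazardCost (p q r : ℝ) : ℝ := (1 - p) * r / (p - q)

noncomputable def effortWedge (δ p q r : ℝ) : ℝ := (1 - δ) * r / (δ * (p - q))

section

variable {δ p q r : ℝ}

lemma neg_div_sub_mem_Ioo {a b : ℝ} (ha : a < 0) (hb : 0 < b) : -a / (b - a) ∈ Set.Ioo 0 1 :=
  ⟨div_pos (neg_pos.2 ha) (by linarith), (div_lt_one (by linarith)).2 (by linarith)⟩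

lemma moralHazardCost_pos (hqp : q < p) (hp1 : p < 1) (hr : 0 < r) : 0 < moralHazardCost p q r :=
  div_pos (mul_pos (sub_pos.2 hp1) hr) (sub_pos.2 hqp)

lemma sub_mul_add_moralHazardCost (hpq : p ≠ q) :
    (p - q) * (r + moralHazardCost p q r) = (1 - q) * r := by
  have : p - q ≠ 0 := sub_ne_zero.2 hpq
  unfold moralHazardCost
  field_simp
  ring

lemma effortWedge_pos (hδ0 : 0 < δ) (hδ1 : δ < 1) (hqp : q < p) (hr : 0 < r) :
    0 < effortWedge δ p q r :=
  div_pos (mul_pos (sub_pos.2 hδ1) hr) (mul_pos hδ0 (sub_pos.2 hqp))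

lemma effortWedge_lt_of_div_lt {U : ℝ} (hqp : q < p) (hr : 0 < r) (hU : 0 < U)
    (h : r / (r + (p - q) * U) < δ) : effortWedge δ p q r < U := by
  have hpq : 0 < p - q := sub_pos.2 hqp
  have hden : 0 < r + (p - q) * U := by positivity
  have hδ0 : 0 < δ := (div_pos hr hden).trans h
  rw [div_lt_iff₀ hden] at h
  rw [effortWedge, div_lt_iff₀ (mul_pos hδ0 hpq)]
  linarith

lemma one_sub_mul_sub_moralHazardCost_add_mul_effortWedge (hδ : δ ≠ 0) (hpq : p ≠ q) (w : ℝ) :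
    (1 - δ) * (w - moralHazardCost p q r) + δ * effortWedge δ p q r
      = (1 - δ) * (w + p * r / (p - q)) := by
  have : p - q ≠ 0 := sub_ne_zero.2 hpq
  unfold moralHazardCost effortWedge
  field_simp
  ring

lemma one_sub_mul_mul_add_moralHazardCost_lt_effortWedge {a : ℝ} (hδ0 : 0 < δ) (hδ1 : δ < 1)
    (hq0 : 0 ≤ q) (hqp : q < p) (hr : 0 < r) (ha0 : 0 ≤ a) (ha1 : a ≤ 1) :
    (1 - δ) * (a * (r + moralHazardCost p q r)) < effortWedge δ p q r := by
  have hpq : 0 < p - q := sub_pos.2 hqp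
  have hmul : δ * (a * (1 - q)) < 1 :=
    mul_lt_one_of_nonneg_of_lt_one_left hδ0.le hδ1
      (by nlinarith)
  have hcost := sub_mul_add_moralHazardCost (r := r) hqp.ne'
  rw [effortWedge, lt_div_iff₀ (mul_pos hδ0 hpq)]
  calc (1 - δ) * (a * (r + moralHazardCost p q r)) * (δ * (p - q))
      = (1 - δ) * r * (δ * (a * (1 - q))) := by linear_combination (1 - δ) * δ * a * hcost
    _ < (1 - δ) * r * 1 := mul_lt_mul_of_pos_left hmul (mul_pos (sub_pos.2 hδ1) hr)
    _ = (1 - δ) * r := mul_one _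

end

lemma threshold_utilities_order {δ a x U UP UR UI : ℝ} (hδ0 : 0 < δ) (hδ1 : δ < 1)
    (hx0 : 0 < x) (haU : a < U) (hxU : x < U) (hgap : (1 - δ) * (U - a) < x) (hUP0 : 0 < UP)
    (hUP : UP = (1 - δ) * a + δ * x) (hUR : UR = (1 - δ) * a + δ * U)
    (hUI : UI = if x ≤ a then a else UP) :
    (0 < UI ∧ UI < UR ∧ UR < U) ∧ UP ≤ UR ∧ U - x < UR := by
  have hUPR : UP < UR := by rw [hUP, hUR]; nlinarith
  have haR : a < UR := by rw [hUR]; nlinarith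
  have hRU : UR < U := by rw [hUR]; nlinarith
  refine ⟨⟨?_, ?_, hRU⟩, hUPR.le, by rw [hUR]; linarith⟩ <;> rw [hUI] <;> split_ifs with hxa
  exacts [hx0.trans_le hxa, hUP0, haR, hUPR]

theorem stmt6_general (δ p q w r vlo vhi c xδ αbar Ubar δbar UP UR UI : ℝ)
    (hδ0 : 0 < δ) (hδ1 : δ < 1)
    (hq0 : 0 < q) (hqp : q < p) (hp1 : p < 1)
    (hw : 0 < w) (hr : 0 < r)
    (hvlo0 : vlo < 0) (hvhi0 : 0 < vhi)
    (hc : c = (1 - p) * r / (p - q))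
    (hx : xδ = (1 - δ) * r / (δ * (p - q)))
    (hαbar : αbar = -vlo / (vhi - vlo))
    (hUbar : Ubar = αbar * (w - c) + (1 - αbar) * (w + r))
    (hδbar : δbar = r / (r + (p - q) * Ubar))
    (hUP : UP = (1 - δ) * (w - c) + δ * xδ)
    (hUR : UR = (1 - δ) * (w - c) + δ * Ubar)
    (hUI : UI = if xδ ≤ w - c then w - c else UP)
    (hUbar0 : 0 < Ubar) (hδgt : δbar < δ) :
    0 < UP ∧ (0 < UI ∧ UI < UR ∧ UR < Ubar) ∧ UP ≤ UR ∧ Ubar - xδ < UR := by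
  change c = moralHazardCost p q r at hc
  change xδ = effortWedge δ p q r at hx
  obtain ⟨hα0, hα1⟩ := hαbar ▸ neg_div_sub_mem_Ioo hvlo0 hvhi0
  have hgap : Ubar - (w - c) = (1 - αbar) * (r + c) := by rw [hUbar]; ring
  have hwc : w - c < Ubar := by
    have := moralHazardCost_pos hqp hp1 hr
    nlinarith
  have hx0 : 0 < xδ := hx ▸ effortWedge_pos hδ0 hδ1 hqp hr
  have hxU : xδ < Ubar := hx ▸ effortWedge_lt_of_div_lt hqp hr hUbar0 (hδbar ▸ hδgt)
  have hUP0 : 0 < UP := by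
    rw [hUP, hc, hx, one_sub_mul_sub_moralHazardCost_add_mul_effortWedge hδ0.ne' hqp.ne']
    have := hq0.trans hqp
    have := sub_pos.2 hqp
    have := sub_pos.2 hδ1
    positivity
  have hlast : (1 - δ) * (Ubar - (w - c)) < xδ := by
    rw [hgap, hc, hx]
    exact one_sub_mul_mul_add_moralHazardCost_lt_effortWedge hδ0 hδ1 hq0.le hqp hr
      (by linarith) (by linarith)
  exact ⟨hUP0, threshold_utilities_order hδ0 hδ1 hx0 hwc hxU hlast hUP0 hUP hUR hUI⟩

/-- ordering of the threshold utilities U^P, U^I, U^R, U_bar. -/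
theorem stmt6 (δ p q w r g b vlo vhi c xδ αbar Ubar δbar UP UR UI : ℝ)
    (hδ0 : 0 < δ) (hδ1 : δ < 1)
    (hq0 : 0 < q) (hqp : q < p) (hp1 : p < 1)
    (hw : 0 < w) (hr : 0 < r)
    (hvlo : vlo = q * g + (1 - q) * b)
    (hvhi : vhi = p * g + (1 - p) * b)
    (hvlo0 : vlo < 0) (hvhi0 : 0 < vhi)
    (hc : c = (1 - p) * r / (p - q))
    (hx : xδ = (1 - δ) * r / (δ * (p - q)))
    (hαbar : αbar = -vlo / (vhi - vlo))
    (hUbar : Ubar = αbar * (w - c) + (1 - αbar) * (w + r))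
    (hδbar : δbar = r / (r + (p - q) * Ubar))
    (hUP : UP = (1 - δ) * (w - c) + δ * xδ)
    (hUR : UR = (1 - δ) * (w - c) + δ * Ubar)
    (hUI : UI = if xδ ≤ w - c then w - c else UP)
    (hUbar0 : 0 < Ubar) (hδgt : δbar < δ) :
    0 < UP ∧ (0 < UI ∧ UI < UR ∧ UR < Ubar) ∧ UP ≤ UR ∧ Ubar - xδ < UR :=
  stmt6_general δ p q w r vlo vhi c xδ αbar Ubar δbar UP UR UI hδ0 hδ1 hq0 hqp hp1 hw hr hvlo0 hvhi0
    hc hx hαbar hUbar hδbar hUP hUR hUI hUbar0 hδgt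
end

section
/- Assume U_bar > 0 and δ ≥ δ_bar. (i) The only tuple (μ_e, μ_s, U_g, Û) feasible at U = 0 with μ_e = 0 forcing no constraint on U_g is: μ_e = 0, μ_s = 0, and Û = 0. (ii) The only tuple (μ_e, μ_s, U_g, Û) feasible at U = U_bar is (α_bar, 1 - α_bar, U_bar, U_bar). -/
/-!
At `U = 0` every summand of the promise-keeping constraint is nonnegative (the effort payoff is
positive because `U_g ≥ x_δ`), so all of them vanish.

At `U = Ū` write the promised utility as `(1 - δ) S + δ T`, with flow payoff
`S = μ_e (w - c) + μ_s (w + r)` and continuation `T = μ_e U_g + (1 - μ_e) Û ≤ Ū`. The incentive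
constraint says the weight on `w - c` is at least `ᾱ`, which gives `S ≤ (μ_e + μ_s) Ū ≤ Ū`.
Hence every inequality is tight: `μ_e + μ_s = 1`, the incentive constraint binds (so `μ_e = ᾱ`),
and `U_g = Û = Ū`.
-/

/-- A tuple (μe, μs, Ug, Uh) is feasible at promised utility U in the recursive
program characterizing the upper boundary of the PCE payoff set. -/
def Feasible (δ w r c xδ vhi vlo Ubar U μe μs Ug Uh : ℝ) : Prop :=
  0 ≤ μe ∧ 0 ≤ μs ∧ μe + μs ≤ 1 ∧
  xδ ≤ Ug ∧ Ug ≤ Ubar ∧ 0 ≤ Uh ∧ Uh ≤ Ubar ∧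
  U = μe * ((1 - δ) * (w - c) + δ * Ug) + μs * ((1 - δ) * (w + r) + δ * Uh)
      + (1 - μe - μs) * δ * Uh ∧
  (0 < μe + μs → 0 ≤ μe * vhi + μs * vlo)

lemma eq_and_eq_of_convex_comb_eq_of_le {t x y m : ℝ} (ht0 : 0 < t) (ht1 : t < 1)
    (hx : x ≤ m) (hy : y ≤ m) (h : t * x + (1 - t) * y = m) : x = m ∧ y = m := by
  constructor <;> nlinarith

lemma mul_sub_weighted_eq_mul_incentive {vlo vhi a b μe μs : ℝ} (hv : vhi - vlo ≠ 0) :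
    (vhi - vlo) * ((μe + μs) * (-vlo / (vhi - vlo) * a + (1 - -vlo / (vhi - vlo)) * b)
      - (μe * a + μs * b)) = (b - a) * (μe * vhi + μs * vlo) := by
  field_simp
  ring

section Parameters

variable {δ p q w r c xδ vhi vlo αbar Ubar : ℝ}

lemma effort_payoff_pos (hδ0 : 0 < δ) (hδ1 : δ < 1) (hp : 0 ≤ p) (hqp : q < p) (hw : 0 < w)
    (hr : 0 ≤ r) (hc : c = (1 - p) * r / (p - q)) (hx : xδ = (1 - δ) * r / (δ * (p - q)))
    {Ug : ℝ} (hUg : xδ ≤ Ug) : 0 < (1 - δ) * (w - c) + δ * Ug := by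
  have hpq : p - q ≠ 0 := (sub_pos.mpr hqp).ne'
  have hδx : δ * xδ = (1 - δ) * r / (p - q) := by
    rw [hx]; field_simp
  calc 0 < (1 - δ) * (w + p * r / (p - q)) := by
        have : 0 ≤ p * r / (p - q) := div_nonneg (mul_nonneg hp hr) (sub_pos.mpr hqp).le
        nlinarith
    _ = (1 - δ) * (w - c) + δ * xδ := by rw [hδx, hc]; field_simp; ring
    _ ≤ (1 - δ) * (w - c) + δ * Ug := by gcongr

lemma c_add_r_pos (hqp : q < p) (hp1 : p < 1) (hr : 0 < r) (hc : c = (1 - p) * r / (p - q)) :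
    0 < c + r := by
  have hpq : 0 < p - q := sub_pos.mpr hqp
  have : c + r = (1 - q) * r / (p - q) := by rw [hc]; field_simp; ring
  rw [this]
  exact div_pos (mul_pos (by linarith) hr) hpq

lemma xδ_le_Ubar (hδ0 : 0 < δ) (hqp : q < p) (hr : 0 < r) (hUbar0 : 0 < Ubar)
    (hx : xδ = (1 - δ) * r / (δ * (p - q))) (hδge : r / (r + (p - q) * Ubar) ≤ δ) :
    xδ ≤ Ubar := by
  have hpq : 0 < p - q := sub_pos.mpr hqp
  have hrδ : r ≤ δ * (r + (p - q) * Ubar) := (div_le_iff₀ (by positivity)).mp hδge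
  rw [hx, div_le_iff₀ (by positivity)]
  linarith

lemma Feasible.incentive_nonneg {U μe μs Ug Uh : ℝ}
    (h : Feasible δ w r c xδ vhi vlo Ubar U μe μs Ug Uh) : 0 ≤ μe * vhi + μs * vlo := by
  obtain ⟨hμe, hμs, -, -, -, -, -, -, hic⟩ := h
  rcases (add_nonneg hμe hμs).eq_or_lt with hsum | hsum
  · obtain ⟨rfl, rfl⟩ := (add_eq_zero_iff_of_nonneg hμe hμs).mp hsum.symm
    simp
  · exact hic hsum

lemma feasible_zero (hxU : xδ ≤ Ubar) (hUbar0 : 0 ≤ Ubar) :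
    Feasible δ w r c xδ vhi vlo Ubar 0 0 0 Ubar 0 :=
  ⟨le_rfl, le_rfl, by norm_num, hxU, le_rfl, le_rfl, hUbar0, by ring,
    fun h => absurd h (by norm_num)⟩

lemma Feasible.eq_zero_of_utility_zero (hδ0 : 0 < δ) (hδ1 : δ < 1) (hp : 0 ≤ p) (hqp : q < p)
    (hw : 0 < w) (hr : 0 < r) (hc : c = (1 - p) * r / (p - q))
    (hx : xδ = (1 - δ) * r / (δ * (p - q))) {μe μs Ug Uh : ℝ}
    (h : Feasible δ w r c xδ vhi vlo Ubar 0 μe μs Ug Uh) : μe = 0 ∧ μs = 0 ∧ Uh = 0 := by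
  obtain ⟨hμe, hμs, hsum, hUg, -, hUh, -, hU, -⟩ := h
  have hA := effort_payoff_pos hδ0 hδ1 hp hqp hw hr.le hc hx hUg
  have hB : 0 < (1 - δ) * (w + r) + δ * Uh := by
    have := mul_nonneg hδ0.le hUh
    nlinarith
  have hrest : 0 ≤ (1 - μe - μs) * δ * Uh :=
    mul_nonneg (mul_nonneg (by linarith) hδ0.le) hUh
  obtain ⟨hAB, hrest0⟩ := (add_eq_zero_iff_of_nonneg
    (add_nonneg (mul_nonneg hμe hA.le) (mul_nonneg hμs hB.le)) hrest).mp hU.symm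
  obtain ⟨hA0, hB0⟩ := (add_eq_zero_iff_of_nonneg
    (mul_nonneg hμe hA.le) (mul_nonneg hμs hB.le)).mp hAB
  have he : μe = 0 := (mul_eq_zero.mp hA0).resolve_right hA.ne'
  have hs : μs = 0 := (mul_eq_zero.mp hB0).resolve_right hB.ne'
  subst he hs
  exact ⟨rfl, rfl, by simpa [hδ0.ne'] using hrest0⟩

lemma threshold_weight_mem_Ioo (hvlo0 : vlo < 0) (hvhi0 : 0 < vhi) :
    -vlo / (vhi - vlo) ∈ Set.Ioo 0 1 := by
  have hv : 0 < vhi - vlo := by linarith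
  exact ⟨div_pos (neg_pos.mpr hvlo0) hv, (div_lt_one hv).mpr (by linarith)⟩

lemma threshold_weight_incentive_eq_zero (hv : vhi - vlo ≠ 0)
    (hαbar : αbar = -vlo / (vhi - vlo)) : αbar * vhi + (1 - αbar) * vlo = 0 := by
  rw [hαbar]
  field_simp
  ring

lemma feasible_Ubar (hvlo0 : vlo < 0) (hvhi0 : 0 < vhi) (hαbar : αbar = -vlo / (vhi - vlo))
    (hUbar : Ubar = αbar * (w - c) + (1 - αbar) * (w + r)) (hxU : xδ ≤ Ubar) (hUbar0 : 0 ≤ Ubar) :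
    Feasible δ w r c xδ vhi vlo Ubar Ubar αbar (1 - αbar) Ubar Ubar := by
  obtain ⟨hα0, hα1⟩ := hαbar ▸ threshold_weight_mem_Ioo hvlo0 hvhi0
  exact ⟨hα0.le, by linarith, by linarith, hxU, le_rfl, hUbar0, le_rfl,
    by linear_combination (1 - δ) * hUbar,
    fun _ => (threshold_weight_incentive_eq_zero (by linarith) hαbar).ge⟩

lemma Feasible.eq_of_utility_Ubar (hδ0 : 0 < δ) (hδ1 : δ < 1) (hvlo0 : vlo < 0)
    (hvhi0 : 0 < vhi) (hcr : 0 < c + r) (hαbar : αbar = -vlo / (vhi - vlo))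
    (hUbar : Ubar = αbar * (w - c) + (1 - αbar) * (w + r)) (hUbar0 : 0 < Ubar)
    {μe μs Ug Uh : ℝ} (h : Feasible δ w r c xδ vhi vlo Ubar Ubar μe μs Ug Uh) :
    μe = αbar ∧ μs = 1 - αbar ∧ Ug = Ubar ∧ Uh = Ubar := by
  have hic := h.incentive_nonneg
  obtain ⟨hμe, hμs, hsum, -, hUg, -, hUh, hU, -⟩ := h
  have hv : 0 < vhi - vlo := by linarith
  obtain ⟨hα0, hα1⟩ := hαbar ▸ threshold_weight_mem_Ioo hvlo0 hvhi0
  have hgap : (vhi - vlo) * ((μe + μs) * Ubar - (μe * (w - c) + μs * (w + r)))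
      = (c + r) * (μe * vhi + μs * vlo) := by
    rw [hUbar, hαbar, mul_sub_weighted_eq_mul_incentive hv.ne']
    ring
  have hS : μe * (w - c) + μs * (w + r) ≤ (μe + μs) * Ubar := by
    have := (mul_nonneg_iff_of_pos_left hv).mp (hgap ▸ mul_nonneg hcr.le hic)
    linarith
  have hS' : μe * (w - c) + μs * (w + r) ≤ Ubar :=
    hS.trans (mul_le_of_le_one_left hUbar0.le hsum)
  have hT : μe * Ug + (1 - μe) * Uh ≤ Ubar := by
    nlinarith [mul_le_mul_of_nonneg_left hUg hμe]
  obtain ⟨hTeq, hSeq⟩ := eq_and_eq_of_convex_comb_eq_of_le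
    (y := μe * (w - c) + μs * (w + r)) hδ0 hδ1 hT hS' (by linear_combination -hU)
  have hsum1 : μe + μs = 1 :=
    le_antisymm hsum (le_of_mul_le_mul_right (by linarith) hUbar0)
  have hbind : μe * vhi + μs * vlo = 0 := by
    have : (c + r) * (μe * vhi + μs * vlo) = 0 := by rw [← hgap, hsum1, hSeq]; ring
    exact (mul_eq_zero.mp this).resolve_left hcr.ne'
  have hμe : μe = αbar := by
    rw [hαbar, eq_div_iff hv.ne']
    linear_combination hbind - vlo * hsum1
  subst hμe
  obtain ⟨hUg', hUh'⟩ := eq_and_eq_of_convex_comb_eq_of_le hα0 hα1 hUg hUh hTeq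
  exact ⟨rfl, by linarith, hUg', hUh'⟩

end Parameters

theorem stmt7_general (δ p q w r vlo vhi c xδ αbar Ubar δbar : ℝ)
    (hδ0 : 0 < δ) (hδ1 : δ < 1)
    (hq0 : 0 < q) (hqp : q < p) (hp1 : p < 1)
    (hw : 0 < w) (hr : 0 < r)
    (hvlo0 : vlo < 0) (hvhi0 : 0 < vhi)
    (hc : c = (1 - p) * r / (p - q))
    (hx : xδ = (1 - δ) * r / (δ * (p - q)))
    (hαbar : αbar = -vlo / (vhi - vlo))
    (hUbar : Ubar = αbar * (w - c) + (1 - αbar) * (w + r))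
    (hδbar : δbar = r / (r + (p - q) * Ubar))
    (hUbar0 : 0 < Ubar) (hδge : δbar ≤ δ) :
    ((∃ Ug, Feasible δ w r c xδ vhi vlo Ubar 0 0 0 Ug 0) ∧
      (∀ μe μs Ug Uh, Feasible δ w r c xδ vhi vlo Ubar 0 μe μs Ug Uh →
        μe = 0 ∧ μs = 0 ∧ Uh = 0)) ∧
    (Feasible δ w r c xδ vhi vlo Ubar Ubar αbar (1 - αbar) Ubar Ubar ∧
      (∀ μe μs Ug Uh, Feasible δ w r c xδ vhi vlo Ubar Ubar μe μs Ug Uh →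
        μe = αbar ∧ μs = 1 - αbar ∧ Ug = Ubar ∧ Uh = Ubar)) := by
  have hp : 0 ≤ p := hq0.le.trans hqp.le
  have hxU : xδ ≤ Ubar := xδ_le_Ubar hδ0 hqp hr hUbar0 hx (hδbar ▸ hδge)
  refine ⟨⟨⟨Ubar, feasible_zero hxU hUbar0.le⟩, fun μe μs Ug Uh h => ?_⟩,
    feasible_Ubar hvlo0 hvhi0 hαbar hUbar hxU hUbar0.le, fun μe μs Ug Uh h => ?_⟩
  · exact h.eq_zero_of_utility_zero hδ0 hδ1 hp hqp hw hr hc hx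
  · exact h.eq_of_utility_Ubar hδ0 hδ1 hvlo0 hvhi0 (c_add_r_pos hqp hp1 hr hc) hαbar hUbar hUbar0

/-- the unique feasible tuples at the extreme utilities 0 and U_bar. -/
theorem stmt7 (δ p q w r g b vlo vhi c xδ αbar Ubar δbar : ℝ)
    (hδ0 : 0 < δ) (hδ1 : δ < 1)
    (hq0 : 0 < q) (hqp : q < p) (hp1 : p < 1)
    (hw : 0 < w) (hr : 0 < r)
    (hvlo : vlo = q * g + (1 - q) * b)
    (hvhi : vhi = p * g + (1 - p) * b)
    (hvlo0 : vlo < 0) (hvhi0 : 0 < vhi)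
    (hc : c = (1 - p) * r / (p - q))
    (hx : xδ = (1 - δ) * r / (δ * (p - q)))
    (hαbar : αbar = -vlo / (vhi - vlo))
    (hUbar : Ubar = αbar * (w - c) + (1 - αbar) * (w + r))
    (hδbar : δbar = r / (r + (p - q) * Ubar))
    (hUbar0 : 0 < Ubar) (hδge : δbar ≤ δ) :
    ((∃ Ug, Feasible δ w r c xδ vhi vlo Ubar 0 0 0 Ug 0) ∧
      (∀ μe μs Ug Uh, Feasible δ w r c xδ vhi vlo Ubar 0 μe μs Ug Uh →
        μe = 0 ∧ μs = 0 ∧ Uh = 0)) ∧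
    (Feasible δ w r c xδ vhi vlo Ubar Ubar αbar (1 - αbar) Ubar Ubar ∧
      (∀ μe μs Ug Uh, Feasible δ w r c xδ vhi vlo Ubar Ubar μe μs Ug Uh →
        μe = αbar ∧ μs = 1 - αbar ∧ Ug = Ubar ∧ Uh = Ubar)) :=
  stmt7_general δ p q w r vlo vhi c xδ αbar Ubar δbar hδ0 hδ1 hq0 hqp hp1 hw hr hvlo0 hvhi0 hc hx
    hαbar hUbar hδbar hUbar0 hδge
end

section
/- Assume U_bar > 0 and δ > δ_bar. Let F : ℝ → ℝ be concave and continuous on [0, U_bar], with F(0) = 0 and F ≥ 0 on [0, U_bar], and suppose F satisfies the Bellman equation. Let U ∈ (0, U_bar) be a point at which F is differentiable with derivative F'(U) ≥ 0. Then every maximizer (μ_e, μ_s, U_g, Û) at U has μ_s = 0. -/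
/-- The objective of a tuple (μe, μs, Ug, Uh): the average client's promised
utility. -/
noncomputable def Obj (δ p xδ vhi vlo : ℝ) (F : ℝ → ℝ) (μe μs Ug Uh : ℝ) : ℝ :=
  μe * ((1 - δ) * vhi + δ * (p * F Ug + (1 - p) * F (Ug - xδ)))
    + μs * (1 - δ) * vlo + (1 - μe) * δ * F Uh

/-- F satisfies the Bellman equation: at every U ∈ [0, U_bar] the feasible set is
nonempty and F(U) is the maximum of the objective over feasible tuples, attained
by some feasible tuple. -/
def Bellman (δ p w r c xδ vhi vlo Ubar : ℝ) (F : ℝ → ℝ) : Prop :=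
  ∀ U ∈ Set.Icc (0 : ℝ) Ubar,
    (∃ μe μs Ug Uh, Feasible δ w r c xδ vhi vlo Ubar U μe μs Ug Uh) ∧
    (∀ μe μs Ug Uh, Feasible δ w r c xδ vhi vlo Ubar U μe μs Ug Uh →
        Obj δ p xδ vhi vlo F μe μs Ug Uh ≤ F U) ∧
    (∃ μe μs Ug Uh, Feasible δ w r c xδ vhi vlo Ubar U μe μs Ug Uh ∧
        Obj δ p xδ vhi vlo F μe μs Ug Uh = F U)

/-- A maximizer at U: a feasible tuple attaining the maximum F(U). -/
def IsMaximizer (δ p w r c xδ vhi vlo Ubar : ℝ) (F : ℝ → ℝ)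
    (U μe μs Ug Uh : ℝ) : Prop :=
  Feasible δ w r c xδ vhi vlo Ubar U μe μs Ug Uh ∧
  Obj δ p xδ vhi vlo F μe μs Ug Uh = F U

lemma ConcaveOn.le_of_hasDerivAt_of_nonneg {S : Set ℝ} {f : ℝ → ℝ} {x y f' : ℝ}
    (hfc : ConcaveOn ℝ S f) (hx : x ∈ S) (hy : y ∈ S) (hxy : x < y)
    (hf' : HasDerivAt f f' y) (hf'0 : 0 ≤ f') : f x ≤ f y :=
  (slope_nonneg_iff_of_le hxy.le).1 (hf'0.trans (hfc.le_slope_of_hasDerivAt hx hy hxy hf'))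

lemma Feasible.sub_shirk {δ w r c xδ vhi vlo Ubar U μe μs Ug Uh u : ℝ}
    (hF : Feasible δ w r c xδ vhi vlo Ubar U μe μs Ug Uh) (hvlo : vlo ≤ 0)
    (hu0 : 0 ≤ u) (huμs : u ≤ μs) :
    Feasible δ w r c xδ vhi vlo Ubar (U - u * ((1 - δ) * (w + r))) μe (μs - u) Ug Uh := by
  obtain ⟨hμe, -, hsum, hUg, hUg', hUh, hUh', hU, hobedient⟩ := hF
  refine ⟨hμe, by linarith, by linarith, hUg, hUg', hUh, hUh', by rw [hU]; ring, fun hpos => ?_⟩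
  linarith [hobedient (by linarith), mul_nonpos_of_nonneg_of_nonpos hu0 hvlo]

lemma Obj_sub_shirk (δ p xδ vhi vlo : ℝ) (F : ℝ → ℝ) (μe μs Ug Uh u : ℝ) :
    Obj δ p xδ vhi vlo F μe (μs - u) Ug Uh
      = Obj δ p xδ vhi vlo F μe μs Ug Uh - u * ((1 - δ) * vlo) := by
  unfold Obj
  ring

theorem stmt9_general (δ p w r vlo vhi c xδ Ubar : ℝ)
    (hδ1 : δ < 1)
    (hw : 0 < w) (hr : 0 < r)
    (hvlo0 : vlo < 0)
    (F : ℝ → ℝ)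
    (hconc : ConcaveOn ℝ (Set.Icc 0 Ubar) F)
    (hBell : Bellman δ p w r c xδ vhi vlo Ubar F)
    (U : ℝ) (hU : U ∈ Set.Ioo (0 : ℝ) Ubar)
    (d : ℝ) (hd : HasDerivAt F d U) (hd0 : 0 ≤ d) :
    ∀ μe μs Ug Uh, IsMaximizer δ p w r c xδ vhi vlo Ubar F U μe μs Ug Uh →
      μs = 0 := by
  rintro μe μs Ug Uh ⟨hfeas, hobj⟩
  by_contra hμs
  have hμs : 0 < μs := hfeas.2.1.lt_of_ne' hμs
  have hk : 0 < (1 - δ) * (w + r) := mul_pos (sub_pos.2 hδ1) (add_pos hw hr)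
  set u := min μs (U / ((1 - δ) * (w + r)))
  have hu : 0 < u := lt_min hμs (div_pos hU.1 hk)
  have huU : u * ((1 - δ) * (w + r)) ≤ U :=
    (le_div_iff₀ hk).1 (min_le_right _ _)
  set U' := U - u * ((1 - δ) * (w + r))
  have hU'U : U' < U := sub_lt_self _ (mul_pos hu hk)
  have hU'mem : U' ∈ Set.Icc 0 Ubar := ⟨sub_nonneg.2 huU, by linarith [hU.2]⟩
  have hgain : F U - u * ((1 - δ) * vlo) ≤ F U' := by
    rw [← hobj, ← Obj_sub_shirk]
    exact (hBell U' hU'mem).2.1 _ _ _ _ (hfeas.sub_shirk hvlo0.le hu.le (min_le_left _ _))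
  have hdescent : F U' ≤ F U :=
    hconc.le_of_hasDerivAt_of_nonneg hU'mem (Set.Ioo_subset_Icc_self hU) hU'U hd hd0
  linarith [mul_pos hu (mul_pos (sub_pos.2 hδ1) (neg_pos.2 hvlo0))]

/-- where F has a nonnegative derivative, every maximizer puts zero
probability on recommending shirking. -/
theorem stmt9 (δ p q w r g b vlo vhi c xδ αbar Ubar δbar : ℝ)
    (hδ0 : 0 < δ) (hδ1 : δ < 1)
    (hq0 : 0 < q) (hqp : q < p) (hp1 : p < 1)
    (hw : 0 < w) (hr : 0 < r)
    (hvlo : vlo = q * g + (1 - q) * b)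
    (hvhi : vhi = p * g + (1 - p) * b)
    (hvlo0 : vlo < 0) (hvhi0 : 0 < vhi)
    (hc : c = (1 - p) * r / (p - q))
    (hx : xδ = (1 - δ) * r / (δ * (p - q)))
    (hαbar : αbar = -vlo / (vhi - vlo))
    (hUbar : Ubar = αbar * (w - c) + (1 - αbar) * (w + r))
    (hδbar : δbar = r / (r + (p - q) * Ubar))
    (hUbar0 : 0 < Ubar) (hδgt : δbar < δ)
    (F : ℝ → ℝ)
    (hconc : ConcaveOn ℝ (Set.Icc 0 Ubar) F)
    (hcont : ContinuousOn F (Set.Icc 0 Ubar))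
    (hF0 : F 0 = 0)
    (hFnn : ∀ U ∈ Set.Icc (0 : ℝ) Ubar, 0 ≤ F U)
    (hBell : Bellman δ p w r c xδ vhi vlo Ubar F)
    (U : ℝ) (hU : U ∈ Set.Ioo (0 : ℝ) Ubar)
    (d : ℝ) (hd : HasDerivAt F d U) (hd0 : 0 ≤ d) :
    ∀ μe μs Ug Uh, IsMaximizer δ p w r c xδ vhi vlo Ubar F U μe μs Ug Uh →
      μs = 0 :=
  stmt9_general δ p w r vlo vhi c xδ Ubar hδ1 hw hr hvlo0 F hconc hBell U hU d hd hd0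
end

section
/- Assume U_bar > 0 and δ > δ_bar. Let F : ℝ → ℝ be concave and continuous on [0, U_bar], with F(0) = 0 and F ≥ 0 on [0, U_bar], and suppose F satisfies the Bellman equation. Then F is affine on [U^R, U_bar]: there exist real a, m such that F(U) = a + m·U for all U ∈ [U^R, U_bar]. -/
theorem add_slope_mul_sub {𝕜 : Type*} [Field 𝕜] (f : 𝕜 → 𝕜) (x y : 𝕜) :
    f y + slope f y x * (x - y) = f x := by
  rw [mul_comm, ← smul_eq_mul, sub_smul_slope, vsub_eq_sub, add_sub_cancel]

section Concave

variable {𝕜 : Type*} [Field 𝕜] [LinearOrder 𝕜] [IsStrictOrderedRing 𝕜] {s : Set 𝕜} {f : 𝕜 → 𝕜}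
  {x y z : 𝕜}

theorem ConcaveOn.le_add_slope_mul_sub (hf : ConcaveOn 𝕜 s f) (hx : x ∈ s) (hy : y ∈ s)
    (hz : z ∈ s) (hzx : z ≤ x) (hxy : x < y) : f z ≤ f y + slope f y x * (z - y) := by
  have hzy : z < y := hzx.trans_lt hxy
  have hslope : slope f y x ≤ slope f y z := hf.slope_anti hy ⟨hz, hzy.ne⟩ ⟨hx, hxy.ne⟩ hzx
  calc f z = f y + slope f y z * (z - y) := (add_slope_mul_sub f z y).symm
    _ ≤ f y + slope f y x * (z - y) :=
      add_le_add_right (mul_le_mul_of_nonpos_right hslope (sub_nonpos.2 hzy.le)) _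

theorem ConcaveOn.add_slope_mul_sub_le (hf : ConcaveOn 𝕜 s f) (hx : x ∈ s) (hy : y ∈ s)
    (hz : z ∈ s) (hxz : x ≤ z) (hzy : z ≤ y) (hxy : x < y) :
    f y + slope f y x * (z - y) ≤ f z := by
  rcases hzy.lt_or_eq with hzy | rfl
  · have hslope : slope f y z ≤ slope f y x := hf.slope_anti hy ⟨hx, hxy.ne⟩ ⟨hz, hzy.ne⟩ hxz
    calc f y + slope f y x * (z - y) ≤ f y + slope f y z * (z - y) :=
          add_le_add_right (mul_le_mul_of_nonpos_right hslope (sub_nonpos.2 hzy.le)) _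
      _ = f z := add_slope_mul_sub f z y
  · simp

end Concave

section Parameters

variable {δ p q w r c xδ vhi vlo αbar Ubar δbar UR : ℝ}

theorem alphaBar_pos (hαbar : αbar = -vlo / (vhi - vlo)) (hvlo0 : vlo < 0) (hvhi0 : 0 < vhi) :
    0 < αbar :=
  hαbar ▸ div_pos (neg_pos.2 hvlo0) (by linarith)

theorem alphaBar_lt_one (hαbar : αbar = -vlo / (vhi - vlo)) (hvlo0 : vlo < 0) (hvhi0 : 0 < vhi) :
    αbar < 1 := by
  rw [hαbar, div_lt_one (by linarith)]
  linarith

theorem mul_vhi_add_mul_vlo (hαbar : αbar = -vlo / (vhi - vlo)) (hvv : vlo < vhi) (μe μs : ℝ) :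
    μe * vhi + μs * vlo = (vhi - vlo) * ((1 - αbar) * μe - αbar * μs) := by
  subst hαbar
  field_simp [(sub_pos.2 hvv).ne']
  ring

theorem one_sub_mul_lt_of_deltaBar_lt (hr : 0 < r) (hpq : q < p) (hUbar0 : 0 < Ubar)
    (hδbar : δbar = r / (r + (p - q) * Ubar)) (hδgt : δbar < δ) :
    (1 - δ) * r < δ * ((p - q) * Ubar) := by
  have : 0 < (p - q) * Ubar := mul_pos (sub_pos.2 hpq) hUbar0
  rw [hδbar, div_lt_iff₀ (by linarith)] at hδgt
  linarith

theorem xδ_lt_Ubar (hx : xδ = (1 - δ) * r / (δ * (p - q))) (hδ0 : 0 < δ) (hpq : q < p)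
    (h : (1 - δ) * r < δ * ((p - q) * Ubar)) : xδ < Ubar := by
  rw [hx, div_lt_iff₀ (mul_pos hδ0 (sub_pos.2 hpq))]
  linarith

theorem UR_pos (hUR : UR = (1 - δ) * (w - c) + δ * Ubar) (hc : c = (1 - p) * r / (p - q))
    (hw : 0 < w) (hδ1 : δ < 1) (hr : 0 < r) (hp0 : 0 ≤ p) (hpq : q < p)
    (h : (1 - δ) * r < δ * ((p - q) * Ubar)) : 0 < UR := by
  have hpq' : 0 < p - q := sub_pos.2 hpq
  have hc' : (1 - δ) * c * (p - q) = (1 - δ) * ((1 - p) * r) := by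
    rw [hc]; field_simp
  have hpr : 0 ≤ (1 - δ) * p * r := mul_nonneg (mul_nonneg (by linarith) hp0) hr.le
  have hcU : (1 - δ) * c < δ * Ubar := by
    refine lt_of_mul_lt_mul_right ?_ hpq'.le
    linarith
  have hw' : 0 < (1 - δ) * w := mul_pos (by linarith) hw
  rw [hUR]
  linarith

theorem Ubar_sub_UR (hUbar : Ubar = αbar * (w - c) + (1 - αbar) * (w + r))
    (hUR : UR = (1 - δ) * (w - c) + δ * Ubar) : Ubar - UR = (1 - δ) * ((1 - αbar) * (r + c)) := by
  rw [hUR]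
  linear_combination (1 - δ) * hUbar

theorem UR_lt_Ubar (hUbar : Ubar = αbar * (w - c) + (1 - αbar) * (w + r))
    (hUR : UR = (1 - δ) * (w - c) + δ * Ubar) (hδ1 : δ < 1) (hα1 : αbar < 1) (hrc : 0 < r + c) :
    UR < Ubar := by
  have := Ubar_sub_UR hUbar hUR
  have : 0 < (1 - δ) * ((1 - αbar) * (r + c)) := by
    have := sub_pos.2 hδ1; have := sub_pos.2 hα1; positivity
  linarith

theorem Ubar_sub_xδ_le_UR (hUbar : Ubar = αbar * (w - c) + (1 - αbar) * (w + r))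
    (hUR : UR = (1 - δ) * (w - c) + δ * Ubar) (hc : c = (1 - p) * r / (p - q))
    (hx : xδ = (1 - δ) * r / (δ * (p - q))) (hδ0 : 0 < δ) (hδ1 : δ < 1) (hq0 : 0 ≤ q)
    (hpq : q < p) (hr : 0 < r) (hα0 : 0 ≤ αbar) (hα1 : αbar < 1) : Ubar - xδ ≤ UR := by
  have hpq' : 0 < p - q := sub_pos.2 hpq
  have hrc : (r + c) * (p - q) = r * (1 - q) := by
    rw [hc]; field_simp; ring
  have hδα : δ * (1 - αbar) * (1 - q) ≤ 1 := by
    have ht1 : δ * (1 - αbar) ≤ 1 := mul_le_one₀ hδ1.le (by linarith) (by linarith)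
    have ht0 : 0 ≤ δ * (1 - αbar) := mul_nonneg hδ0.le (by linarith)
    nlinarith [mul_nonneg ht0 hq0]
  suffices (1 - δ) * ((1 - αbar) * (r + c)) ≤ xδ by linarith [Ubar_sub_UR hUbar hUR]
  rw [hx, le_div_iff₀ (mul_pos hδ0 hpq')]
  calc (1 - δ) * ((1 - αbar) * (r + c)) * (δ * (p - q))
      = (1 - δ) * r * (δ * (1 - αbar) * (1 - q)) := by
        linear_combination (1 - δ) * δ * (1 - αbar) * hrc
    _ ≤ (1 - δ) * r * 1 := by gcongr
    _ = (1 - δ) * r := mul_one _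

end Parameters

section Bellman

variable {δ p w r c xδ vhi vlo Ubar αbar U μe μs Ug Uh : ℝ} {F : ℝ → ℝ}

theorem Feasible.alphaBar_mul_le (h : Feasible δ w r c xδ vhi vlo Ubar U μe μs Ug Uh)
    (hαbar : αbar = -vlo / (vhi - vlo)) (hvv : vlo < vhi) : αbar * μs ≤ (1 - αbar) * μe := by
  obtain ⟨hμe, hμs, -, -, -, -, -, -, hIC⟩ := h
  rcases (add_nonneg hμe hμs).eq_or_lt with hzero | hpos
  · have hμe0 : μe = 0 := by linarith
    have hμs0 : μs = 0 := by linarith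
    simp [hμe0, hμs0]
  · have := hIC hpos
    rw [mul_vhi_add_mul_vlo hαbar hvv] at this
    linarith [nonneg_of_mul_nonneg_right this (sub_pos.2 hvv)]

theorem feasible_full_effort {UR : ℝ} (hUR : UR = (1 - δ) * (w - c) + δ * Ubar) (hxU : xδ ≤ Ubar)
    (hU0 : 0 ≤ Ubar) (hvhi : 0 ≤ vhi) : Feasible δ w r c xδ vhi vlo Ubar UR 1 0 Ubar 0 :=
  ⟨zero_le_one, le_rfl, by norm_num, hxU, le_rfl, le_rfl, hU0, by rw [hUR]; ring, fun _ => by simpa⟩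

theorem feasible_alphaBar (hαbar : αbar = -vlo / (vhi - vlo)) (hvv : vlo < vhi)
    (hα0 : 0 ≤ αbar) (hα1 : αbar ≤ 1) (hxU : xδ ≤ Ubar) (hU0 : 0 ≤ Ubar)
    (hUbar : Ubar = αbar * (w - c) + (1 - αbar) * (w + r)) :
    Feasible δ w r c xδ vhi vlo Ubar Ubar αbar (1 - αbar) Ubar Ubar := by
  refine ⟨hα0, sub_nonneg.2 hα1, by linarith, hxU, le_rfl, hU0, le_rfl, ?_, fun _ => ?_⟩
  · linear_combination (1 - δ) * hUbar
  · rw [mul_vhi_add_mul_vlo hαbar hvv]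
    exact le_of_eq (by ring)

theorem obj_le_of_le {yg yb yh : ℝ} (hμe0 : 0 ≤ μe) (hμe1 : μe ≤ 1) (hδ : 0 ≤ δ)
    (hp0 : 0 ≤ p) (hp1 : p ≤ 1) (hg : F Ug ≤ yg) (hb : F (Ug - xδ) ≤ yb) (hh : F Uh ≤ yh) :
    Obj δ p xδ vhi vlo F μe μs Ug Uh ≤
      μe * ((1 - δ) * vhi + δ * (p * yg + (1 - p) * yb)) + μs * (1 - δ) * vlo
        + (1 - μe) * δ * yh := by
  have : 0 ≤ 1 - p := by linarith
  have : 0 ≤ 1 - μe := by linarith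
  unfold Obj
  gcongr

theorem Feasible.obj_chord_le {UR M m n : ℝ} (hδ0 : 0 ≤ δ) (hδ1 : δ ≤ 1) (hp1 : p ≤ 1)
    (hα1 : αbar < 1)
    (hUbar : Ubar = αbar * (w - c) + (1 - αbar) * (w + r))
    (hUR : UR = (1 - δ) * (w - c) + δ * Ubar)
    (hM : F Ubar = M) (hm : F UR = M + m * (UR - Ubar)) (hn : F (Ubar - xδ) = M - n * xδ)
    (hmn : m ≤ n) (hL0 : 0 ≤ M - m * Ubar)
    (hR : Obj δ p xδ vhi vlo F 1 0 Ubar 0 ≤ F UR)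
    (hTop : Obj δ p xδ vhi vlo F αbar (1 - αbar) Ubar Ubar ≤ F Ubar)
    (h : Feasible δ w r c xδ vhi vlo Ubar U μe μs Ug Uh) (hIC : αbar * μs ≤ (1 - αbar) * μe) :
    μe * ((1 - δ) * vhi + δ * (p * (M + m * (Ug - Ubar)) + (1 - p) * (M + n * (Ug - xδ - Ubar))))
      + μs * (1 - δ) * vlo + (1 - μe) * δ * (M + m * (Uh - Ubar)) ≤ M + m * (U - Ubar) := by
  obtain ⟨hμe, hμs, hμ1, -, hUg, -, -, hPK, -⟩ := h
  set K := (1 - δ) * vhi + δ * (p * M + (1 - p) * (M - n * xδ))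
  set Ae := M + m * (UR - Ubar) - K
  set As := (1 - δ) * (M + m * (w + r - Ubar) - vlo)
  set Q := δ * (1 - p) * (n - m) * (Ubar - Ug)
  have hAe : 0 ≤ Ae := by
    simp only [Obj, hM, hm, hn] at hR
    linarith
  have hAs : 0 ≤ αbar * Ae + (1 - αbar) * As := by
    simp only [Obj, hM, hn] at hTop
    linear_combination hTop + (-αbar * m) * hUR + ((1 - δ) * m) * hUbar
  have hQ : 0 ≤ Q :=
    mul_nonneg (mul_nonneg (mul_nonneg hδ0 (by linarith)) (by linarith)) (by linarith)
  -- Promise keeping splits the slack by option into `Ae + Q` (effort), `As` (shirking) and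
  -- `(1 - δ) (M - m Ubar)` (the rest); only `As` can be negative, and `hAs` with IC covers it.
  rw [← sub_nonneg]
  have key : M + m * (U - Ubar) - (μe * ((1 - δ) * vhi + δ * (p * (M + m * (Ug - Ubar))
      + (1 - p) * (M + n * (Ug - xδ - Ubar)))) + μs * (1 - δ) * vlo
      + (1 - μe) * δ * (M + m * (Uh - Ubar)))
      = μe * (Ae + Q) + μs * As + (1 - μe - μs) * ((1 - δ) * (M - m * Ubar)) := by
    linear_combination m * hPK - (m * μe) * hUR
  rw [key]
  refine nonneg_of_mul_nonneg_left ?_ (sub_pos.2 hα1)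
  have h1 : 0 ≤ ((1 - αbar) * μe - αbar * μs) * Ae := mul_nonneg (by linarith) hAe
  have h2 : 0 ≤ μs * (αbar * Ae + (1 - αbar) * As) := mul_nonneg hμs hAs
  have h3 : 0 ≤ (1 - αbar) * μe * Q := mul_nonneg (mul_nonneg (by linarith) hμe) hQ
  have h4 : 0 ≤ (1 - αbar) * (1 - μe - μs) * ((1 - δ) * (M - m * Ubar)) :=
    mul_nonneg (mul_nonneg (by linarith) (by linarith)) (mul_nonneg (by linarith) hL0)
  linear_combination h1 + h2 + h3 + h4

theorem Bellman.le_of_supersolution (hBell : Bellman δ p w r c xδ vhi vlo Ubar F)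
    (hcont : ContinuousOn F (Set.Icc 0 Ubar)) {L G : ℝ → ℝ} (hL : ContinuousOn L (Set.Icc 0 Ubar))
    (hU0 : 0 ≤ Ubar) (hδ0 : 0 ≤ δ) (hδ1 : δ < 1) (hp0 : 0 ≤ p) (hp1 : p ≤ 1) (hx0 : 0 ≤ xδ)
    (hG : ∀ z, 0 ≤ z → z ≤ Ubar - xδ → F z ≤ G z)
    (hsuper : ∀ U μe μs Ug Uh, Feasible δ w r c xδ vhi vlo Ubar U μe μs Ug Uh →
      μe * ((1 - δ) * vhi + δ * (p * L Ug + (1 - p) * G (Ug - xδ))) + μs * (1 - δ) * vlo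
        + (1 - μe) * δ * L Uh ≤ L U) :
    ∀ U ∈ Set.Icc 0 Ubar, F U ≤ L U := by
  obtain ⟨U₀, hU₀, hmax⟩ :=
    isCompact_Icc.exists_isMaxOn (Set.nonempty_Icc.2 hU0) (hcont.sub hL)
  set D := F U₀ - L U₀
  have hFD : ∀ U ∈ Set.Icc 0 Ubar, F U ≤ L U + D := fun U hU => by
    have := isMaxOn_iff.1 hmax U hU
    simp only [Pi.sub_apply] at this
    linarith
  suffices hD : D ≤ 0 from fun U hU => by linarith [hFD U hU]
  by_contra! hD
  obtain ⟨μe, μs, Ug, Uh, h, hobj⟩ := (hBell U₀ hU₀).2.2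
  have hsup := hsuper _ _ _ _ _ h
  obtain ⟨hμe, hμs, hμ1, hxUg, hUgU, hUh0, hUhU, -, -⟩ := h
  have hle := obj_le_of_le (vhi := vhi) (vlo := vlo) (μs := μs) hμe (by linarith) hδ0 hp0 hp1
    (hFD Ug ⟨hx0.trans hxUg, hUgU⟩) (hG (Ug - xδ) (by linarith) (by linarith)) (hFD Uh ⟨hUh0, hUhU⟩)
  have hshift : δ * ((μe * p + (1 - μe)) * D) ≤ δ * D :=
    mul_le_mul_of_nonneg_left (mul_le_of_le_one_left hD.le (by nlinarith)) hδ0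
  have hF : F U₀ ≤ L U₀ + δ * D := by
    rw [← hobj]
    linear_combination hle + hsup + hshift
  nlinarith [mul_pos (sub_pos.2 hδ1) hD]

theorem Bellman.exists_affine_on_Icc {UR : ℝ} (hBell : Bellman δ p w r c xδ vhi vlo Ubar F)
    (hconc : ConcaveOn ℝ (Set.Icc 0 Ubar) F) (hcont : ContinuousOn F (Set.Icc 0 Ubar))
    (hF0 : F 0 = 0) (hδ0 : 0 ≤ δ) (hδ1 : δ < 1) (hp0 : 0 ≤ p) (hp1 : p ≤ 1)
    (hαbar : αbar = -vlo / (vhi - vlo)) (hvlo0 : vlo < 0) (hvhi0 : 0 < vhi)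
    (hUbar : Ubar = αbar * (w - c) + (1 - αbar) * (w + r))
    (hUR : UR = (1 - δ) * (w - c) + δ * Ubar) (hUR0 : 0 ≤ UR) (hURU : UR < Ubar)
    (hx0 : 0 < xδ) (hxU : xδ ≤ Ubar) (hxUR : Ubar - xδ ≤ UR) :
    ∃ a m : ℝ, ∀ U ∈ Set.Icc UR Ubar, F U = a + m * U := by
  have hvv : vlo < vhi := hvlo0.trans hvhi0
  have hα0 := alphaBar_pos hαbar hvlo0 hvhi0
  have hα1 := alphaBar_lt_one hαbar hvlo0 hvhi0
  have hUbarI : Ubar ∈ Set.Icc 0 Ubar := ⟨hUR0.trans hURU.le, le_rfl⟩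
  have hURI : UR ∈ Set.Icc 0 Ubar := ⟨hUR0, hURU.le⟩
  set m := slope F Ubar UR
  set n := slope F Ubar (Ubar - xδ)
  have hmn : m ≤ n :=
    hconc.slope_anti hUbarI ⟨⟨by linarith, by linarith⟩, by simp [hx0.ne']⟩ ⟨hURI, hURU.ne⟩ hxUR
  have hL0 : 0 ≤ F Ubar - m * Ubar := by
    have := hconc.le_add_slope_mul_sub hURI hUbarI ⟨le_rfl, hUbarI.1⟩ hUR0 hURU
    rw [hF0] at this
    linarith
  have hn : F (Ubar - xδ) = F Ubar - n * xδ := by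
    linear_combination -(add_slope_mul_sub F (Ubar - xδ) Ubar)
  have hR := (hBell UR hURI).2.1 _ _ _ _ (feasible_full_effort hUR hxU hUbarI.1 hvhi0.le)
  have hTop := (hBell Ubar hUbarI).2.1 _ _ _ _
    (feasible_alphaBar hαbar hvv hα0.le hα1.le hxU hUbarI.1 hUbar)
  have hupper := hBell.le_of_supersolution hcont (L := fun z => F Ubar + m * (z - Ubar))
    (G := fun z => F Ubar + n * (z - Ubar)) (by fun_prop) hUbarI.1 hδ0 hδ1 hp0 hp1 hx0.le
    (fun z hz0 hz => hconc.le_add_slope_mul_sub ⟨by linarith, by linarith⟩ hUbarI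
      ⟨hz0, by linarith⟩ hz (by linarith))
    (fun U μe μs Ug Uh h => h.obj_chord_le hδ0 hδ1.le hp1 hα1 hUbar hUR rfl
      (add_slope_mul_sub F UR Ubar).symm hn hmn hL0 hR hTop (h.alphaBar_mul_le hαbar hvv))
  refine ⟨F Ubar - m * Ubar, m, fun U hU => le_antisymm ?_ ?_⟩
  · linarith [hupper U ⟨hUR0.trans hU.1, hU.2⟩]
  · linarith [hconc.add_slope_mul_sub_le hURI hUbarI ⟨hUR0.trans hU.1, hU.2⟩ hU.1 hU.2 hURU]

end Bellman

theorem stmt12_general (δ p q w r vlo vhi c xδ αbar Ubar δbar UR : ℝ)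
    (hδ0 : 0 < δ) (hδ1 : δ < 1)
    (hq0 : 0 < q) (hqp : q < p) (hp1 : p < 1)
    (hw : 0 < w) (hr : 0 < r)
    (hvlo0 : vlo < 0) (hvhi0 : 0 < vhi)
    (hc : c = (1 - p) * r / (p - q))
    (hx : xδ = (1 - δ) * r / (δ * (p - q)))
    (hαbar : αbar = -vlo / (vhi - vlo))
    (hUbar : Ubar = αbar * (w - c) + (1 - αbar) * (w + r))
    (hδbar : δbar = r / (r + (p - q) * Ubar))
    (hUR : UR = (1 - δ) * (w - c) + δ * Ubar)
    (hUbar0 : 0 < Ubar) (hδgt : δbar < δ)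
    (F : ℝ → ℝ)
    (hconc : ConcaveOn ℝ (Set.Icc 0 Ubar) F)
    (hcont : ContinuousOn F (Set.Icc 0 Ubar))
    (hF0 : F 0 = 0)
    (hBell : Bellman δ p w r c xδ vhi vlo Ubar F) :
    ∃ a m : ℝ, ∀ U ∈ Set.Icc UR Ubar, F U = a + m * U := by
  have hp0 : 0 ≤ p := (hq0.trans hqp).le
  have hα0 := alphaBar_pos hαbar hvlo0 hvhi0
  have hα1 := alphaBar_lt_one hαbar hvlo0 hvhi0
  have hc0 : 0 < c := hc ▸ div_pos (mul_pos (sub_pos.2 hp1) hr) (sub_pos.2 hqp)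
  have hx0 : 0 < xδ := hx ▸ div_pos (mul_pos (sub_pos.2 hδ1) hr) (mul_pos hδ0 (sub_pos.2 hqp))
  have hδr := one_sub_mul_lt_of_deltaBar_lt hr hqp hUbar0 hδbar hδgt
  exact hBell.exists_affine_on_Icc hconc hcont hF0 hδ0.le hδ1 hp0 hp1.le hαbar hvlo0 hvhi0 hUbar hUR
    (UR_pos hUR hc hw hδ1 hr hp0 hqp hδr).le (UR_lt_Ubar hUbar hUR hδ1 hα1 (by linarith))
    hx0 (xδ_lt_Ubar hx hδ0 hqp hδr).le
    (Ubar_sub_xδ_le_UR hUbar hUR hc hx hδ0 hδ1 hq0.le hqp hr hα0.le hα1)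

/-- F is affine on [U^R, U_bar]. -/
theorem stmt12 (δ p q w r g b vlo vhi c xδ αbar Ubar δbar UR : ℝ)
    (hδ0 : 0 < δ) (hδ1 : δ < 1)
    (hq0 : 0 < q) (hqp : q < p) (hp1 : p < 1)
    (hw : 0 < w) (hr : 0 < r)
    (hvlo : vlo = q * g + (1 - q) * b)
    (hvhi : vhi = p * g + (1 - p) * b)
    (hvlo0 : vlo < 0) (hvhi0 : 0 < vhi)
    (hc : c = (1 - p) * r / (p - q))
    (hx : xδ = (1 - δ) * r / (δ * (p - q)))
    (hαbar : αbar = -vlo / (vhi - vlo))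
    (hUbar : Ubar = αbar * (w - c) + (1 - αbar) * (w + r))
    (hδbar : δbar = r / (r + (p - q) * Ubar))
    (hUR : UR = (1 - δ) * (w - c) + δ * Ubar)
    (hUbar0 : 0 < Ubar) (hδgt : δbar < δ)
    (F : ℝ → ℝ)
    (hconc : ConcaveOn ℝ (Set.Icc 0 Ubar) F)
    (hcont : ContinuousOn F (Set.Icc 0 Ubar))
    (hF0 : F 0 = 0)
    (hFnn : ∀ U ∈ Set.Icc (0 : ℝ) Ubar, 0 ≤ F U)
    (hBell : Bellman δ p w r c xδ vhi vlo Ubar F) :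
    ∃ a m : ℝ, ∀ U ∈ Set.Icc UR Ubar, F U = a + m * U :=
  stmt12_general δ p q w r vlo vhi c xδ αbar Ubar δbar UR hδ0 hδ1 hq0 hqp hp1 hw hr hvlo0 hvhi0 hc
    hx hαbar hUbar hδbar hUR hUbar0 hδgt F hconc hcont hF0 hBell
end

section
/- Assume w - c ≥ x_δ, and let F : ℝ → ℝ satisfy F(U') = (v_hi/w)·U' for all U' ∈ [0, w-c]. Fix U ∈ [0, w-c]. Then for every μ_e ∈ [0,1] and every U_g, U_b, Û ∈ [0, w-c] with U_g - U_b ≥ x_δ (required only when μ_e > 0) and U = μ_e·((1-δ)·w + δ·(p·U_g + (1-p)·U_b)) + (1-μ_e)·δ·Û, the value μ_e·((1-δ)·v_hi + δ·(p·F(U_g) + (1-p)·F(U_b))) + (1-μ_e)·δ·F(Û) equals (v_hi/w)·U. Moreover at least one such (μ_e, U_g, U_b, Û) exists. -/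
/-!
On `[0, w - c]` the value function is the line through the origin with slope `v_hi / w`, and
the flow payoff `v_hi` is that line evaluated at the flow utility `w`; so the value of any
decomposition is the line applied to the promise-keeping expression, which is `U`.
For existence, reward a good output with `w - c` and a bad one with `w - c - x_δ`: the
incentive constraint binds, and because `δ (1 - p) x_δ = (1 - δ) c` the effort branch delivers
exactly `w - c`. Mixing it with rejection followed by `Û = 0` reaches every `U ∈ [0, w - c]`.
-/

lemma linear_value_decomposition (k δ p w μe Ug Ub Uh : ℝ) (F : ℝ → ℝ)
    (hFg : F Ug = k * Ug) (hFb : F Ub = k * Ub) (hFh : F Uh = k * Uh) :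
    μe * ((1 - δ) * (k * w) + δ * (p * F Ug + (1 - p) * F Ub)) + (1 - μe) * δ * F Uh
      = k * (μe * ((1 - δ) * w + δ * (p * Ug + (1 - p) * Ub)) + (1 - μe) * δ * Uh) := by
  rw [hFg, hFb, hFh]
  ring

lemma effort_wedge_pos {δ p q r : ℝ} (hδ0 : 0 < δ) (hδ1 : δ < 1) (hqp : q < p) (hr : 0 < r) :
    0 < (1 - δ) * r / (δ * (p - q)) :=
  div_pos (mul_pos (sub_pos.2 hδ1) hr) (mul_pos hδ0 (sub_pos.2 hqp))

lemma effort_utility_binding_incentive {δ p q : ℝ} (w r : ℝ) (hδ0 : δ ≠ 0) (hqp : p - q ≠ 0) :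
    (1 - δ) * w + δ * (p * (w - (1 - p) * r / (p - q))
        + (1 - p) * (w - (1 - p) * r / (p - q) - (1 - δ) * r / (δ * (p - q))))
      = w - (1 - p) * r / (p - q) := by
  field_simp
  ring

lemma exists_mix_with_zero_reject {δ W U : ℝ} (hW : 0 < W) (hU : U ∈ Set.Icc 0 W) :
    ∃ μe ∈ Set.Icc (0 : ℝ) 1, U = μe * W + (1 - μe) * δ * 0 :=
  ⟨U / W, ⟨div_nonneg hU.1 hW.le, div_le_one_of_le₀ hU.2 hW.le⟩, by field_simp; ring⟩

theorem stmt16_general (δ p q w r vhi c xδ : ℝ)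
    (hδ0 : 0 < δ) (hδ1 : δ < 1)
    (hqp : q < p)
    (hw : 0 < w) (hr : 0 < r)
    (hc : c = (1 - p) * r / (p - q))
    (hx : xδ = (1 - δ) * r / (δ * (p - q)))
    (hwc : xδ ≤ w - c)
    (F : ℝ → ℝ)
    (hF : ∀ U' ∈ Set.Icc (0 : ℝ) (w - c), F U' = (vhi / w) * U')
    (U : ℝ) (hU : U ∈ Set.Icc (0 : ℝ) (w - c)) :
    (∀ μe ∈ Set.Icc (0 : ℝ) 1, ∀ Ug ∈ Set.Icc (0 : ℝ) (w - c),
      ∀ Ub ∈ Set.Icc (0 : ℝ) (w - c), ∀ Uh ∈ Set.Icc (0 : ℝ) (w - c),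
        (0 < μe → xδ ≤ Ug - Ub) →
        U = μe * ((1 - δ) * w + δ * (p * Ug + (1 - p) * Ub)) + (1 - μe) * δ * Uh →
        μe * ((1 - δ) * vhi + δ * (p * F Ug + (1 - p) * F Ub)) + (1 - μe) * δ * F Uh
          = (vhi / w) * U) ∧
    (∃ μe ∈ Set.Icc (0 : ℝ) 1, ∃ Ug ∈ Set.Icc (0 : ℝ) (w - c),
      ∃ Ub ∈ Set.Icc (0 : ℝ) (w - c), ∃ Uh ∈ Set.Icc (0 : ℝ) (w - c),
        (0 < μe → xδ ≤ Ug - Ub) ∧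
        U = μe * ((1 - δ) * w + δ * (p * Ug + (1 - p) * Ub)) + (1 - μe) * δ * Uh) := by
  have hx0 : 0 < xδ := hx ▸ effort_wedge_pos hδ0 hδ1 hqp hr
  have hwc0 : 0 < w - c := hx0.trans_le hwc
  constructor
  · intro μe _ Ug hUg Ub hUb Uh hUh _ hsum
    have hflow : vhi = vhi / w * w := (div_mul_cancel₀ vhi hw.ne').symm
    rw [hsum, hflow, linear_value_decomposition _ _ _ _ _ _ _ _ F (hF Ug hUg) (hF Ub hUb) (hF Uh hUh),
      ← hflow]
  · have hbinding : (1 - δ) * w + δ * (p * (w - c) + (1 - p) * (w - c - xδ)) = w - c := by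
      subst hc hx
      exact effort_utility_binding_incentive w r hδ0.ne' (sub_pos.2 hqp).ne'
    obtain ⟨μe, hμe, hmix⟩ := exists_mix_with_zero_reject (δ := δ) hwc0 hU
    refine ⟨μe, hμe, w - c, ⟨hwc0.le, le_rfl⟩, w - c - xδ, ⟨by linarith, by linarith⟩,
      0, ⟨le_rfl, hwc0.le⟩, fun _ => by linarith, ?_⟩
    rwa [hbinding]

/-- when w - c ≥ x_δ and F is the line (v_hi/w)·U on [0, w-c],
every feasible decomposition attains exactly the value (v_hi/w)·U, and a feasible
decomposition exists. -/
theorem stmt16 (δ p q w r g b vlo vhi c xδ : ℝ)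
    (hδ0 : 0 < δ) (hδ1 : δ < 1)
    (hq0 : 0 < q) (hqp : q < p) (hp1 : p < 1)
    (hw : 0 < w) (hr : 0 < r)
    (hvlo : vlo = q * g + (1 - q) * b)
    (hvhi : vhi = p * g + (1 - p) * b)
    (hvlo0 : vlo < 0) (hvhi0 : 0 < vhi)
    (hc : c = (1 - p) * r / (p - q))
    (hx : xδ = (1 - δ) * r / (δ * (p - q)))
    (hwc : xδ ≤ w - c)
    (F : ℝ → ℝ)
    (hF : ∀ U' ∈ Set.Icc (0 : ℝ) (w - c), F U' = (vhi / w) * U')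
    (U : ℝ) (hU : U ∈ Set.Icc (0 : ℝ) (w - c)) :
    (∀ μe ∈ Set.Icc (0 : ℝ) 1, ∀ Ug ∈ Set.Icc (0 : ℝ) (w - c),
      ∀ Ub ∈ Set.Icc (0 : ℝ) (w - c), ∀ Uh ∈ Set.Icc (0 : ℝ) (w - c),
        (0 < μe → xδ ≤ Ug - Ub) →
        U = μe * ((1 - δ) * w + δ * (p * Ug + (1 - p) * Ub)) + (1 - μe) * δ * Uh →
        μe * ((1 - δ) * vhi + δ * (p * F Ug + (1 - p) * F Ub)) + (1 - μe) * δ * F Uh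
          = (vhi / w) * U) ∧
    (∃ μe ∈ Set.Icc (0 : ℝ) 1, ∃ Ug ∈ Set.Icc (0 : ℝ) (w - c),
      ∃ Ub ∈ Set.Icc (0 : ℝ) (w - c), ∃ Uh ∈ Set.Icc (0 : ℝ) (w - c),
        (0 < μe → xδ ≤ Ug - Ub) ∧
        U = μe * ((1 - δ) * w + δ * (p * Ug + (1 - p) * Ub)) + (1 - μe) * δ * Uh) :=
  stmt16_general δ p q w r vhi c xδ hδ0 hδ1 hqp hw hr hc hx hwc F hF U hU
end
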